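/- Let C = [[2,1],[1,1]] over ℤ and let Lₖ be the Lucas numbers (L₀=2, L₁=1, L_{k+2}=L_{k+1}+L_k). Then for all n ≥ 1, det(C^n − I) = 2 − L_{2n}, and hence |det(C^n − I)| = L_{2n} − 2. -/

import Mathlib

/-!
`C = !![2, 1; 1, 1]` has determinant 1 and trace 3, so for every `n` the matrix `C ^ n` has
determinant 1, while by Cayley–Hamilton the traces `tₙ = tr (C ^ n)` satisfy
`tₙ₊₂ = 3 tₙ₊₁ - tₙ`, the recurrence of the even-indexed Lucas numbers; hence `tₙ = L₂ₙ`.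
For a `2 × 2` matrix `det (A - 1) = det A - tr A + 1`, which gives `det (C ^ n - 1) = 2 - L₂ₙ`.
-/

def lucas : ℕ → ℤ
  | 0 => 2
  | 1 => 1
  | k + 2 => lucas (k + 1) + lucas k

namespace Matrix

variable {R : Type*} [CommRing R]

lemma det_sub_one_fin_two (A : Matrix (Fin 2) (Fin 2) R) :
    (A - 1).det = A.det - A.trace + 1 := by
  simp only [det_fin_two, trace_fin_two, sub_apply, one_apply_eq, one_apply_ne (by decide : (0 : Fin 2) ≠ 1),
    one_apply_ne (by decide : (1 : Fin 2) ≠ 0)]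
  ring

lemma sq_fin_two_eq_trace_smul_sub_det_smul (A : Matrix (Fin 2) (Fin 2) R) :
    A ^ 2 = A.trace • A - A.det • (1 : Matrix (Fin 2) (Fin 2) R) := by
  ext i j
  fin_cases i <;> fin_cases j <;> simp [sq, mul_apply, trace_fin_two, det_fin_two] <;> ring

lemma trace_pow_add_two_fin_two (A : Matrix (Fin 2) (Fin 2) R) (n : ℕ) :
    (A ^ (n + 2)).trace = A.trace * (A ^ (n + 1)).trace - A.det * (A ^ n).trace := by
  rw [pow_add, sq_fin_two_eq_trace_smul_sub_det_smul, Matrix.mul_sub, Matrix.mul_smul,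
    Matrix.mul_smul, Matrix.mul_one, ← pow_succ, trace_sub, trace_smul, trace_smul, smul_eq_mul,
    smul_eq_mul]

end Matrix

lemma lucas_add_two (k : ℕ) : lucas (k + 2) = lucas (k + 1) + lucas k := rfl

lemma lucas_two_mul_add_four (n : ℕ) :
    lucas (2 * n + 4) = 3 * lucas (2 * n + 2) - lucas (2 * n) := by
  have h₄ : lucas (2 * n + 4) = lucas (2 * n + 3) + lucas (2 * n + 2) := rfl
  have h₃ : lucas (2 * n + 3) = lucas (2 * n + 2) + lucas (2 * n + 1) := rfl
  have h₂ : lucas (2 * n + 2) = lucas (2 * n + 1) + lucas (2 * n) := rfl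
  omega

lemma one_le_lucas : ∀ k, 1 ≤ lucas k
  | 0 => by decide
  | 1 => by decide
  | k + 2 => by
    rw [lucas_add_two]
    linarith [one_le_lucas k, one_le_lucas (k + 1)]

lemma two_le_lucas_two_mul : ∀ n, 2 ≤ lucas (2 * n)
  | 0 => by decide
  | n + 1 => by
    rw [Nat.mul_succ, lucas_add_two]
    linarith [one_le_lucas (2 * n), one_le_lucas (2 * n + 1)]

lemma trace_pow_eq_lucas_two_mul :
    ∀ n, ((!![2, 1; 1, 1] : Matrix (Fin 2) (Fin 2) ℤ) ^ n).trace = lucas (2 * n)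
  | 0 => by simp [lucas]
  | 1 => by simp [Matrix.trace_fin_two, lucas]
  | n + 2 => by
    rw [Matrix.trace_pow_add_two_fin_two, trace_pow_eq_lucas_two_mul (n + 1),
      trace_pow_eq_lucas_two_mul n, Matrix.trace_fin_two_of, Matrix.det_fin_two_of,
      show 2 * (n + 2) = 2 * n + 4 by ring, lucas_two_mul_add_four]
    norm_num [mul_add]

theorem stmt_15_general (n : ℕ) :
    ((!![2, 1; 1, 1] : Matrix (Fin 2) (Fin 2) ℤ) ^ n - 1).det = 2 - lucas (2 * n) ∧
      |((!![2, 1; 1, 1] : Matrix (Fin 2) (Fin 2) ℤ) ^ n - 1).det| = lucas (2 * n) - 2 := by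
  have hdet : ((!![2, 1; 1, 1] : Matrix (Fin 2) (Fin 2) ℤ) ^ n - 1).det = 2 - lucas (2 * n) := by
    rw [Matrix.det_sub_one_fin_two, Matrix.det_pow, Matrix.det_fin_two_of,
      trace_pow_eq_lucas_two_mul]
    ring
  refine ⟨hdet, ?_⟩
  rw [hdet, abs_sub_comm, abs_of_nonneg (sub_nonneg.2 (two_le_lucas_two_mul n))]

theorem stmt_15 (n : ℕ) (hn : 1 ≤ n) :
    ((!![2, 1; 1, 1] : Matrix (Fin 2) (Fin 2) ℤ) ^ n - 1).det = 2 - lucas (2 * n) ∧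
      |((!![2, 1; 1, 1] : Matrix (Fin 2) (Fin 2) ℤ) ^ n - 1).det| = lucas (2 * n) - 2 :=
  stmt_15_general n
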